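/- Let F be a nonzero homogeneous polynomial of degree n in X₀, X₁, X₂ over ℂ, let mⱼ (j = 0, 1, 2) be the multiplicity of {F = 0} at the j-th coordinate point, let F' be the image of F under the quadratic substitution X₀ ↦ X₁X₂, X₁ ↦ X₀X₂, X₂ ↦ X₀X₁, and write F' = X₀^{m₀} X₁^{m₁} X₂^{m₂} · G. Then G is a nonzero homogeneous polynomial of degree 2n − (m₀ + m₁ + m₂); in particular, if m₀ + m₁ + m₂ > n, then the degree of G is strictly less than n (untwisting by the quadratic Cremona transformation strictly decreases the degree). -/

import Mathlib

open MvPolynomial Finset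

/-! The substitution `Xᵢ ↦ ∏_{j ≠ i} Xⱼ` maps the monomial `X^d` to `X^{σ d}` with
`(σ d)ⱼ = ∑_{i ≠ j} dᵢ`. With `k ≥ 2` variables `σ` is injective: `|σ d| + |d| = k |d|` recovers
`|d|`, and then `dⱼ = |d| - (σ d)ⱼ`. So distinct monomials of `F` stay distinct, whence `F' ≠ 0`
and `G ≠ 0`, and `F'` is homogeneous of degree `(k - 1) n = 2n`. Cancelling the monomial
`X^m` from a homogeneous polynomial leaves one of degree `2n - |m|`, and `|m| ≤ 2n` because `G`
has a nonzero coefficient. -/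

namespace MvPolynomial

variable {ι R : Type*} [Fintype ι] [DecidableEq ι] [CommSemiring R]

variable (R) in
noncomputable def cremonaSubst (i : ι) : MvPolynomial ι R := ∏ j ∈ univ.erase i, X j

noncomputable def cremonaExponent (d : ι →₀ ℕ) : ι →₀ ℕ :=
  Finsupp.equivFunOnFinite.symm fun j => ∑ i ∈ univ.erase j, d i

@[simp]
lemma cremonaExponent_apply (d : ι →₀ ℕ) (j : ι) :
    cremonaExponent d j = ∑ i ∈ univ.erase j, d i := rfl

lemma cremonaExponent_apply_add (d : ι →₀ ℕ) (j : ι) :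
    cremonaExponent d j + d j = d.degree := by
  rw [cremonaExponent_apply, sum_erase_add _ _ (mem_univ j), Finsupp.degree_eq_sum]

lemma degree_cremonaExponent_add (d : ι →₀ ℕ) :
    (cremonaExponent d).degree + d.degree = Fintype.card ι * d.degree := by
  calc (cremonaExponent d).degree + d.degree = ∑ j, (cremonaExponent d j + d j) := by
        rw [sum_add_distrib, Finsupp.degree_eq_sum, Finsupp.degree_eq_sum]
    _ = Fintype.card ι * d.degree := by
        simp only [cremonaExponent_apply_add, sum_const, card_univ, smul_eq_mul]

lemma cremonaExponent_injective [Nontrivial ι] :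
    Function.Injective (cremonaExponent : (ι →₀ ℕ) → ι →₀ ℕ) := by
  intro d d' h
  have hcard : 1 < Fintype.card ι := Fintype.one_lt_card
  have hdeg : d.degree = d'.degree := by
    have h₁ := degree_cremonaExponent_add d
    have h₂ := degree_cremonaExponent_add d'
    rw [h] at h₁
    nlinarith
  ext j
  have h₁ := cremonaExponent_apply_add d j
  have h₂ := cremonaExponent_apply_add d' j
  rw [h] at h₁
  omega

lemma bind₁_cremonaSubst_monomial (d : ι →₀ ℕ) (r : R) :
    bind₁ (cremonaSubst R) (monomial d r) = monomial (cremonaExponent d) r := by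
  rw [bind₁_monomial, monomial_eq, Finsupp.prod_fintype _ _ fun _ => pow_zero _,
    prod_subset (subset_univ _) fun i _ hi => by rw [Finsupp.notMem_support_iff.mp hi, pow_zero]]
  congr 1
  simp only [cremonaSubst, cremonaExponent_apply, ← prod_pow, ← prod_pow_eq_pow_sum]
  exact prod_comm' (by simp [and_comm, ne_comm])

lemma coeff_bind₁_cremonaSubst_cremonaExponent [Nontrivial ι] (p : MvPolynomial ι R)
    (d : ι →₀ ℕ) : coeff (cremonaExponent d) (bind₁ (cremonaSubst R) p) = coeff d p := by
  conv_lhs => rw [p.as_sum]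
  simp only [map_sum, bind₁_cremonaSubst_monomial, coeff_sum, coeff_monomial,
    cremonaExponent_injective.eq_iff, sum_ite_eq']
  exact ite_eq_left_iff.mpr fun hd => (notMem_support_iff.mp hd).symm

lemma bind₁_cremonaSubst_injective [Nontrivial ι] :
    Function.Injective (bind₁ (cremonaSubst R) : MvPolynomial ι R → MvPolynomial ι R) :=
  fun p q h => by
    ext d
    rw [← coeff_bind₁_cremonaSubst_cremonaExponent, h, coeff_bind₁_cremonaSubst_cremonaExponent]

lemma IsHomogeneous.bind₁_cremonaSubst {p : MvPolynomial ι R} {n : ℕ} (hp : p.IsHomogeneous n) :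
    (bind₁ (cremonaSubst R) p).IsHomogeneous ((Fintype.card ι - 1) * n) := by
  refine hp.aeval _ fun i => ?_
  simpa [cremonaSubst, card_erase_of_mem] using
    IsHomogeneous.prod (univ.erase i) X (fun _ => 1) fun j _ => isHomogeneous_X R j

lemma cremonaSubst_fin_three :
    cremonaSubst R = ![X 1 * X 2, X 0 * X 2, X 0 * X 1] := by
  funext i
  fin_cases i <;>
    simp [cremonaSubst, show univ.erase (0 : Fin 3) = {1, 2} by decide,
      show univ.erase (1 : Fin 3) = {0, 2} by decide, show univ.erase (2 : Fin 3) = {0, 1} by decide]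

end MvPolynomial

namespace MvPolynomial.IsHomogeneous

variable {σ R : Type*} [CommSemiring R] {s : σ →₀ ℕ} {p : MvPolynomial σ R} {n : ℕ}

lemma degree_add_degree_of_monomial_one_mul (h : (monomial s 1 * p).IsHomogeneous n)
    {e : σ →₀ ℕ} (he : coeff e p ≠ 0) : s.degree + e.degree = n := by
  rw [← map_add, Finsupp.degree_eq_weight_one]
  exact h (by rwa [coeff_monomial_mul, one_mul])

lemma of_monomial_one_mul (h : (monomial s 1 * p).IsHomogeneous (s.degree + n)) :
    p.IsHomogeneous n := fun e he => by
  simpa [Finsupp.degree_eq_weight_one, Pi.one_def] using h.degree_add_degree_of_monomial_one_mul he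

end MvPolynomial.IsHomogeneous

theorem quadratic_untwisting_decreases_degree_general (F : MvPolynomial (Fin 3) ℂ) (n : ℕ)
    (hF : F.IsHomogeneous n) (hF0 : F ≠ 0) (m : Fin 3 → ℕ)
    (G : MvPolynomial (Fin 3) ℂ)
    (hG : MvPolynomial.bind₁
        (![X 1 * X 2, X 0 * X 2, X 0 * X 1] : Fin 3 → MvPolynomial (Fin 3) ℂ) F =
      X 0 ^ m 0 * X 1 ^ m 1 * X 2 ^ m 2 * G) :
    G ≠ 0 ∧ G.IsHomogeneous (2 * n - (m 0 + m 1 + m 2)) ∧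
      (n < m 0 + m 1 + m 2 → 2 * n - (m 0 + m 1 + m 2) < n) := by
  rw [← cremonaSubst_fin_three] at hG
  have hG0 : G ≠ 0 := by
    rintro rfl
    exact hF0 (bind₁_cremonaSubst_injective (by rw [hG, mul_zero, map_zero]))
  set s : Fin 3 →₀ ℕ := Finsupp.single 0 (m 0) + Finsupp.single 1 (m 1) + Finsupp.single 2 (m 2)
  have hs : s.degree = m 0 + m 1 + m 2 := by simp [s]
  have hsG : (monomial s 1 * G).IsHomogeneous (2 * n) := by
    have hF' := hF.bind₁_cremonaSubst
    rw [hG] at hF'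
    simpa only [X_pow_eq_monomial, monomial_mul, mul_one, Fintype.card_fin] using hF'
  have hbound : m 0 + m 1 + m 2 ≤ 2 * n := by
    obtain ⟨e, he⟩ := exists_coeff_ne_zero hG0
    have hdeg := hsG.degree_add_degree_of_monomial_one_mul he
    omega
  refine ⟨hG0, IsHomogeneous.of_monomial_one_mul (s := s) ?_, fun _ => by omega⟩
  rwa [hs, Nat.add_sub_cancel' hbound]

/-- With `F` nonzero homogeneous of degree `n`, `mⱼ` the multiplicity of `{F = 0}` at the `j`-th
coordinate point, `F'` the image of `F` under the quadratic substitution, and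
`F' = X₀^{m₀} X₁^{m₁} X₂^{m₂} · G`, the polynomial `G` is nonzero homogeneous of degree
`2n − (m₀ + m₁ + m₂)`; in particular, if `m₀ + m₁ + m₂ > n`, then `deg G < n`. -/
theorem quadratic_untwisting_decreases_degree (F : MvPolynomial (Fin 3) ℂ) (n : ℕ)
    (hF : F.IsHomogeneous n) (hF0 : F ≠ 0) (m : Fin 3 → ℕ)
    (hm : ∀ j, m j = F.support.inf' (MvPolynomial.support_nonempty.mpr hF0)
      (fun d => ∑ i ∈ Finset.univ.erase j, d i))
    (G : MvPolynomial (Fin 3) ℂ)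
    (hG : MvPolynomial.bind₁
        (![X 1 * X 2, X 0 * X 2, X 0 * X 1] : Fin 3 → MvPolynomial (Fin 3) ℂ) F =
      X 0 ^ m 0 * X 1 ^ m 1 * X 2 ^ m 2 * G) :
    G ≠ 0 ∧ G.IsHomogeneous (2 * n - (m 0 + m 1 + m 2)) ∧
      (n < m 0 + m 1 + m 2 → 2 * n - (m 0 + m 1 + m 2) < n) :=
  quadratic_untwisting_decreases_degree_general F n hF hF0 m G hG
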